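/- arXiv:2311.04347 — 4 statements merged into one kernel-verified Lean document; each statement's English description precedes it below -/
import Mathlib

section
/- For every α > 0, ∫_{-∞}^{∞} |Γ(α+it)|² dt = π Γ(2α) / 2^{2α-1}. -/
/-!
The function `g(v) = σ(v)^α (1 - σ(v))^α = (2 cosh (v/2))^(-2α)`, where `σ` is the logistic
sigmoid, has Fourier transform `𝓕 g ξ = B(α - 2πiξ, α + 2πiξ) = |Γ(α + 2πiξ)|² / Γ(2α)`:
substituting `x = σ(v)` turns the Fourier integral into Euler's Beta integral. This transform is
nonnegative, and a nonnegative Fourier transform of an integrable function continuous at `0` is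
itself integrable (Gaussian regularisation and Fatou), so Fourier inversion at `0` gives
`∫ |Γ(α + 2πiξ)|² dξ = Γ(2α) g(0) = Γ(2α) 2^(-2α)`. Rescaling `t = 2πξ` gives the theorem.
-/

open Real MeasureTheory Filter Complex Set
open scoped FourierTransform Topology RealInnerProductSpace ComplexOrder ComplexConjugate

theorem lintegral_enorm_eq_enorm_integral_of_nonneg {α : Type*} [MeasurableSpace α]
    {μ : Measure α} {g : α → ℂ} (hg : Integrable g μ) (hpos : ∀ x, 0 ≤ g x) :
    ∫⁻ x, ‖g x‖ₑ ∂μ = ‖∫ x, g x ∂μ‖ₑ := by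
  have hint : ∫ x, g x ∂μ = ((∫ x, ‖g x‖ ∂μ : ℝ) : ℂ) := by
    rw [← integral_complex_ofReal]
    exact integral_congr_ae (ae_of_all _ fun x ↦ (norm_of_nonneg' (hpos x)).symm)
  rw [← ofReal_integral_norm_eq_lintegral_enorm hg, hint, ← ofReal_norm,
    Complex.norm_of_nonneg (integral_nonneg fun x ↦ norm_nonneg _)]

section FourierNonneg

variable {V : Type*} [NormedAddCommGroup V] [InnerProductSpace ℝ V]
  [MeasurableSpace V] [BorelSpace V] [FiniteDimensional ℝ V]

theorem tendsto_integral_cexp_sq_smul_fourier {E : Type*} [NormedAddCommGroup E]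
    [NormedSpace ℂ E] [CompleteSpace E] {f : V → E} (hf : Integrable f) (hf0 : ContinuousAt f 0) :
    Tendsto (fun c : ℝ ↦ ∫ w : V, cexp (-c⁻¹ * ‖w‖ ^ 2) • 𝓕 f w) atTop (𝓝 (f 0)) := by
  refine (Real.tendsto_integral_gaussian_smul' hf hf0).congr' ?_
  filter_upwards [Ioi_mem_atTop 0] with c (hc : 0 < c)
  -- Move `𝓕` onto the Gaussian, whose transform is the approximate identity used there.
  have hb : 0 < ((c⁻¹ : ℝ) : ℂ).re := by simpa using hc
  have hg : Integrable (fun w : V ↦ cexp (-(c⁻¹ : ℝ) * ‖w‖ ^ 2)) := by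
    simpa using GaussianFourier.integrable_cexp_neg_mul_sq_norm_add hb 0 (0 : V)
  have hself_adjoint := VectorFourier.integral_fourierIntegral_smul_eq_flip (L := innerₗ V)
    Real.continuous_fourierChar continuous_inner hg hf
  rw [flip_innerₗ] at hself_adjoint
  change ∫ w, 𝓕 (fun w : V ↦ cexp (-(c⁻¹ : ℝ) * ‖w‖ ^ 2)) w • f w = ∫ w, _ • 𝓕 f w
    at hself_adjoint
  rw [← hself_adjoint]
  congr with w
  rw [fourier_gaussian_innerProductSpace hb]
  congr 2
  · simp
  · simp only [ofReal_inv, div_inv_eq_mul, norm_sub_rev, sub_zero]; ring_nf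

theorem integrable_fourier_of_nonneg {f : V → ℂ} (hf : Integrable f) (hf0 : ContinuousAt f 0)
    (hpos : ∀ ξ, 0 ≤ 𝓕 f ξ) : Integrable (𝓕 f) := by
  let D (c : ℝ) (ξ : V) : ℂ := cexp (-c⁻¹ * ‖ξ‖ ^ 2) • 𝓕 f ξ
  have hcont : Continuous (𝓕 f) :=
    VectorFourier.fourierIntegral_continuous Real.continuous_fourierChar continuous_inner hf
  have hD_int : ∀ c > 0, Integrable (D c) := by
    intro c hc
    have hb : 0 < ((c⁻¹ : ℝ) : ℂ).re := by simpa using hc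
    have hg : Integrable (fun ξ : V ↦ cexp (-c⁻¹ * ‖ξ‖ ^ 2)) := by
      simpa using GaussianFourier.integrable_cexp_neg_mul_sq_norm_add hb 0 (0 : V)
    exact hg.smul_bdd (∫ v, ‖f v‖) hcont.aestronglyMeasurable
      (ae_of_all _ fun ξ ↦ VectorFourier.norm_fourierIntegral_le_integral_norm _ _ _ _ _)
  have hD_nonneg : ∀ c ξ, 0 ≤ D c ξ := fun c ξ ↦ by
    simp only [D, smul_eq_mul, ← ofReal_pow, ← ofReal_mul, ← ofReal_neg, ← ofReal_exp]
    exact mul_nonneg (zero_le_real.2 (Real.exp_pos _).le) (hpos ξ)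
  have hD_lim : ∀ ξ, Tendsto (fun n : ℕ ↦ D n ξ) atTop (𝓝 (𝓕 f ξ)) := by
    intro ξ
    have : Tendsto (fun n : ℕ ↦ cexp (-(n : ℝ)⁻¹ * ‖ξ‖ ^ 2)) atTop (𝓝 1) := by
      simpa using ((tendsto_inv_atTop_zero.comp tendsto_natCast_atTop_atTop).ofReal.neg.mul_const
        ((‖ξ‖ : ℂ) ^ 2)).cexp
    simpa [D] using this.smul_const (𝓕 f ξ)
  have hlim := (tendsto_integral_cexp_sq_smul_fourier hf hf0).enorm.comp
    tendsto_natCast_atTop_atTop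
  refine ⟨hcont.aestronglyMeasurable, ?_⟩
  calc ∫⁻ ξ, ‖𝓕 f ξ‖ₑ = ∫⁻ ξ, liminf (fun n : ℕ ↦ ‖D n ξ‖ₑ) atTop :=
        lintegral_congr fun ξ ↦ ((hD_lim ξ).enorm.liminf_eq).symm
    _ ≤ liminf (fun n : ℕ ↦ ∫⁻ ξ, ‖D n ξ‖ₑ) atTop :=
        lintegral_liminf_le' fun n ↦
          ((Continuous.cexp (by fun_prop)).smul hcont).aestronglyMeasurable.enorm
    _ = ‖f 0‖ₑ := by
        refine Tendsto.liminf_eq (hlim.congr' ?_)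
        filter_upwards [eventually_gt_atTop 0] with n hn
        exact (lintegral_enorm_eq_enorm_integral_of_nonneg (hD_int n (by exact_mod_cast hn))
          (hD_nonneg n)).symm
    _ < ⊤ := enorm_lt_top

theorem integral_fourier_eq_of_nonneg {f : V → ℂ} (hf : Integrable f) (hf0 : ContinuousAt f 0)
    (hpos : ∀ ξ, 0 ≤ 𝓕 f ξ) : ∫ ξ, 𝓕 f ξ = f 0 := by
  rw [← hf.fourierInv_fourier_eq (integrable_fourier_of_nonneg hf hf0 hpos) hf0, fourierInv_eq]
  simp

end FourierNonneg

lemma abs_sigmoid_deriv_smul_cpow (u w : ℂ) (v : ℝ) :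
    |sigmoid v * (1 - sigmoid v)| • ((sigmoid v : ℂ) ^ (u - 1) * (1 - (sigmoid v : ℂ)) ^ (w - 1))
      = (sigmoid v : ℂ) ^ u * (1 - (sigmoid v : ℂ)) ^ w := by
  have h0 : (sigmoid v : ℂ) ≠ 0 := ofReal_ne_zero.2 (sigmoid_pos v).ne'
  have h1 : (1 - sigmoid v : ℂ) ≠ 0 := by
    rw [← ofReal_one, ← ofReal_sub, ofReal_ne_zero, ← sigmoid_neg]; exact (sigmoid_pos _).ne'
  rw [abs_of_pos (mul_pos (sigmoid_pos v) (by linarith [sigmoid_lt_one v])), cpow_sub _ _ h0,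
    cpow_sub _ _ h1, cpow_one, cpow_one, real_smul]
  push_cast
  field_simp

lemma integrable_sigmoid_cpow_mul {u w : ℂ} (hu : 0 < u.re) (hw : 0 < w.re) :
    Integrable (fun v : ℝ ↦ (sigmoid v : ℂ) ^ u * (1 - (sigmoid v : ℂ)) ^ w) := by
  have h := integrableOn_image_iff_integrableOn_abs_deriv_smul MeasurableSet.univ
    (fun v _ ↦ (hasDerivAt_sigmoid v).hasDerivWithinAt) sigmoid_injective.injOn
    (fun x : ℝ ↦ (x : ℂ) ^ (u - 1) * (1 - (x : ℂ)) ^ (w - 1))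
  rw [image_univ, range_sigmoid, integrableOn_univ] at h
  simpa only [abs_sigmoid_deriv_smul_cpow] using h.1
    (((betaIntegral_convergent hu hw).1).mono_set Ioo_subset_Ioc_self)

lemma integral_sigmoid_cpow_mul (u w : ℂ) :
    ∫ v : ℝ, (sigmoid v : ℂ) ^ u * (1 - (sigmoid v : ℂ)) ^ w = betaIntegral u w := by
  rw [betaIntegral, intervalIntegral.integral_of_le zero_le_one, integral_Ioc_eq_integral_Ioo,
    ← range_sigmoid, ← image_univ, integral_image_eq_integral_abs_deriv_smul MeasurableSet.univ
      (fun v _ ↦ (hasDerivAt_sigmoid v).hasDerivWithinAt) sigmoid_injective.injOn,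
    Measure.restrict_univ]
  simp only [abs_sigmoid_deriv_smul_cpow]

lemma log_sigmoid_sub_log_one_sub_sigmoid (v : ℝ) :
    Real.log (sigmoid v) - Real.log (1 - sigmoid v) = v := by
  rw [← sigmoid_neg, ← sigmoid_mul_rexp_neg, Real.log_mul (sigmoid_pos v).ne' (Real.exp_pos _).ne',
    Real.log_exp]
  ring

lemma fourier_sigmoid_cpow_mul (u w : ℂ) (ξ : ℝ) :
    𝓕 (fun v : ℝ ↦ (sigmoid v : ℂ) ^ u * (1 - (sigmoid v : ℂ)) ^ w) ξ
      = betaIntegral (u - 2 * π * ξ * I) (w + 2 * π * ξ * I) := by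
  rw [fourier_real_eq_integral_exp_smul, ← integral_sigmoid_cpow_mul]
  congr with v
  have h0 : (sigmoid v : ℂ) ≠ 0 := ofReal_ne_zero.2 (sigmoid_pos v).ne'
  have h1 : 0 < 1 - sigmoid v := by linarith [sigmoid_lt_one v]
  have hlog := log_sigmoid_sub_log_one_sub_sigmoid v
  rw [show (1 - sigmoid v : ℂ) = ((1 - sigmoid v : ℝ) : ℂ) by push_cast; ring]
  simp only [cpow_def_of_ne_zero h0, cpow_def_of_ne_zero (ofReal_ne_zero.2 h1.ne'),
    ← ofReal_log (sigmoid_pos v).le, ← ofReal_log h1.le, smul_eq_mul, ← Complex.exp_add]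
  congr 1
  apply_fun ((↑) : ℝ → ℂ) at hlog
  push_cast at hlog ⊢
  linear_combination (2 * π * ξ * I) * hlog

lemma continuousAt_sigmoid_cpow_mul_zero (u w : ℂ) :
    ContinuousAt (fun v : ℝ ↦ (sigmoid v : ℂ) ^ u * (1 - (sigmoid v : ℂ)) ^ w) 0 := by
  have hs : (sigmoid 0 : ℂ) ∈ slitPlane := by
    rw [mem_slitPlane_iff]; left; norm_num [sigmoid_zero]
  have hs' : 1 - (sigmoid 0 : ℂ) ∈ slitPlane := by
    rw [mem_slitPlane_iff]; left; norm_num [sigmoid_zero]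
  fun_prop (disch := assumption)

lemma sigmoid_zero_cpow_mul_self (α : ℝ) :
    (sigmoid 0 : ℂ) ^ (α : ℂ) * (1 - (sigmoid 0 : ℂ)) ^ (α : ℂ) = ((2 : ℝ) ^ (-(2 * α)) : ℝ) := by
  rw [sigmoid_zero, show (1 : ℂ) - ((2⁻¹ : ℝ) : ℂ) = ((2⁻¹ : ℝ) : ℂ) by push_cast; norm_num,
    ← ofReal_cpow (by norm_num), ← ofReal_mul, ← Real.mul_rpow (by norm_num) (by norm_num),
    show (2⁻¹ * 2⁻¹ : ℝ) = 2 ^ (-2 : ℝ) by norm_num, ← Real.rpow_mul (by norm_num), neg_mul]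

lemma betaIntegral_conj_self {s : ℂ} (hs : 0 < s.re) :
    betaIntegral (conj s) s = ((‖Complex.Gamma s‖ ^ 2 / Real.Gamma (2 * s.re) : ℝ) : ℂ) := by
  have hsum : conj s + s = ((2 * s.re : ℝ) : ℂ) := by
    rw [add_comm, add_conj]
  have h := Gamma_mul_Gamma_eq_betaIntegral (s := conj s) (by simpa using hs) hs
  rw [hsum, Gamma_ofReal, Gamma_conj, mul_comm, mul_conj, normSq_eq_norm_sq] at h
  have hΓ : (Real.Gamma (2 * s.re) : ℂ) ≠ 0 :=
    ofReal_ne_zero.2 (Real.Gamma_pos_of_pos (by linarith)).ne'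
  rw [ofReal_div, h, mul_div_cancel_left₀ _ hΓ]

lemma fourier_sigmoid_cpow_mul_self {α : ℝ} (hα : 0 < α) (ξ : ℝ) :
    𝓕 (fun v : ℝ ↦ (sigmoid v : ℂ) ^ (α : ℂ) * (1 - (sigmoid v : ℂ)) ^ (α : ℂ)) ξ
      = ((‖Complex.Gamma (α + 2 * π * ξ * I)‖ ^ 2 / Real.Gamma (2 * α) : ℝ) : ℂ) := by
  have hconj : conj ((α : ℂ) + 2 * π * ξ * I) = α - 2 * π * ξ * I := by
    apply Complex.ext <;> simp
  have hre : ((α : ℂ) + 2 * π * ξ * I).re = α := by simp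
  rw [fourier_sigmoid_cpow_mul, ← hconj, betaIntegral_conj_self (by rwa [hre]), hre]

theorem integral_norm_Gamma_two_pi_mul_sq {α : ℝ} (hα : 0 < α) :
    ∫ ξ : ℝ, ‖Complex.Gamma (α + 2 * π * ξ * I)‖ ^ 2
      = Real.Gamma (2 * α) * (2 : ℝ) ^ (-(2 * α)) := by
  have hinv := integral_fourier_eq_of_nonneg (integrable_sigmoid_cpow_mul (u := α) (w := α)
      (by simpa using hα) (by simpa using hα)) (continuousAt_sigmoid_cpow_mul_zero _ _)
    fun ξ ↦ by
      rw [fourier_sigmoid_cpow_mul_self hα]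
      exact zero_le_real.2 (div_nonneg (sq_nonneg _) (Real.Gamma_pos_of_pos (by linarith)).le)
  simp only [fourier_sigmoid_cpow_mul_self hα, sigmoid_zero_cpow_mul_self,
    integral_complex_ofReal, ofReal_inj, integral_div] at hinv
  rw [← hinv, mul_div_cancel₀ _ (Real.Gamma_pos_of_pos (by linarith)).ne']

/-- ∫_{-∞}^{∞} |Γ(α+it)|² dt = π Γ(2α)/2^{2α-1}. -/
theorem integral_sq_abs_Gamma_vertical (α : ℝ) (hα : 0 < α) :
    ∫ t : ℝ, ‖Complex.Gamma (α + t * Complex.I)‖ ^ 2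
      = π * Real.Gamma (2 * α) / (2 : ℝ) ^ (2 * α - 1) := by
  have hscale := Measure.integral_comp_mul_left
    (fun t : ℝ ↦ ‖Complex.Gamma (α + t * Complex.I)‖ ^ 2) (2 * π)
  simp only [ofReal_mul, ofReal_ofNat, smul_eq_mul] at hscale
  rw [integral_norm_Gamma_two_pi_mul_sq hα, abs_of_pos (by positivity),
    eq_inv_mul_iff_mul_eq₀ (by positivity)] at hscale
  rw [← hscale, Real.rpow_sub two_pos, Real.rpow_one, Real.rpow_neg two_pos.le]
  field_simp
end

section
/- For every α > 1/2, the dispersion of the function γ ↦ Γ(α - 1/2 + iγ)/Γ(α), defined as D[f] = (∫ t²|f(t)|² dt)/(∫ |f(t)|² dt) (the mean x̄ being 0 by symmetry), equals α/2 - 1/4. -/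
/-!
Write `s = b + it` with `b = α - 1/2 > 0`. Substituting `x = e^{-u}` in Euler's integral shows that
`Γ(b + it)` is the Fourier transform, at `t / 2π`, of `u ↦ exp (-b u - e^{-u})`. Plancherel then
gives `∫ |Γ(b + it)|² dt = 2π ∫ exp (-2b u - 2e^{-u}) du = 2π Γ(2b) / 4^b`. The functional equation
`Γ(s + 1) = s Γ(s)` gives `t² |Γ(b + it)|² = |Γ(b + 1 + it)|² - b² |Γ(b + it)|²`, so the second
moment is `(2b + 1) 2b / 4 - b² = b / 2` times the total mass.
-/

open Real MeasureTheory Complex FourierTransform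
open scoped InnerProductSpace

section Plancherel

variable {V H : Type*} [NormedAddCommGroup V] [InnerProductSpace ℝ V] [FiniteDimensional ℝ V]
  [MeasurableSpace V] [BorelSpace V] [NormedAddCommGroup H] [InnerProductSpace ℂ H]
  [CompleteSpace H]

theorem Continuous.integral_norm_sq_fourier {f : V → H} (hc : Continuous f) (hf : Integrable f)
    (hFf : Integrable (𝓕 f)) : ∫ ξ, ‖𝓕 f ξ‖ ^ 2 = ∫ x, ‖f x‖ ^ 2 := by
  have hsesq : ∫ ξ, ⟪𝓕 f ξ, 𝓕 f ξ⟫_ℂ = ∫ x, ⟪f x, 𝓕⁻ (𝓕 f) x⟫_ℂ := by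
    have h := VectorFourier.integral_sesq_fourierIntegral_eq_neg_flip (innerSL ℂ)
      (L := innerₗ V) Real.continuous_fourierChar continuous_inner hf hFf
    rw [flip_innerₗ] at h
    exact h
  rw [hc.fourierInv_fourier_eq hf hFf] at hsesq
  apply Complex.ofRealLI.injective
  simpa [← LinearIsometry.integral_comp_comm, inner_self_eq_norm_sq_to_K] using hsesq

end Plancherel

noncomputable def gammaProfile (b u : ℝ) : ℝ := Real.exp (-b * u - Real.exp (-u))

theorem gammaProfile_pos (b u : ℝ) : 0 < gammaProfile b u := Real.exp_pos _

theorem continuous_gammaProfile (b : ℝ) : Continuous (gammaProfile b) := by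
  unfold gammaProfile
  fun_prop

theorem Complex.Gamma_eq_fourier_gammaProfile {b : ℝ} (hb : 0 < b) (t : ℝ) :
    Gamma (b + t * I) = 𝓕 (fun u ↦ (gammaProfile b u : ℂ)) (t / (2 * π)) := by
  have hre : (b + t * I).re = b := by simp
  have him : (b + t * I).im = t := by simp
  rw [Gamma_eq_integral (by rwa [hre]), GammaIntegral_eq_mellin, mellin_eq_fourier, hre, him]
  congr! 2 with u
  simp [gammaProfile, Real.exp_sub, Real.exp_neg, div_eq_mul_inv]

theorem integral_gammaProfile {b : ℝ} (hb : 0 < b) : ∫ u, gammaProfile b u = Real.Gamma b := by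
  have h := Complex.Gamma_eq_fourier_gammaProfile hb 0
  rw [ofReal_zero, zero_mul, add_zero, zero_div, Real.fourier_real_eq, Gamma_ofReal] at h
  simp only [mul_zero, neg_zero, AddChar.map_zero_eq_one, one_smul] at h
  exact_mod_cast h.symm

theorem integrable_gammaProfile {b : ℝ} (hb : 0 < b) : Integrable (gammaProfile b) :=
  .of_integral_ne_zero ((integral_gammaProfile hb).trans_ne (Real.Gamma_pos_of_pos hb).ne')

theorem integral_gammaProfile_sq {b : ℝ} (hb : 0 < b) :
    ∫ u, gammaProfile b u ^ 2 = Real.Gamma (2 * b) / 4 ^ b := by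
  -- shifting `u` by `log 2` turns `2 e^{-u}` into `e^{-u}`
  have hshift (u : ℝ) : gammaProfile b u ^ 2 = gammaProfile (2 * b) (u - Real.log 2) / 4 ^ b := by
    rw [Real.rpow_def_of_pos (by norm_num), show (4 : ℝ) = 2 ^ 2 by norm_num, Real.log_pow,
      gammaProfile, gammaProfile, ← Real.exp_nat_mul, ← Real.exp_sub,
      show -(u - Real.log 2) = -u + Real.log 2 by ring, Real.exp_add, Real.exp_log two_pos]
    push_cast
    ring_nf
  simp_rw [hshift, integral_div, integral_sub_right_eq_self (fun u ↦ gammaProfile (2 * b) u),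
    integral_gammaProfile (by positivity : 0 < 2 * b)]

namespace Complex

theorem norm_Gamma_le_Gamma_re {s : ℂ} (hs : 0 < s.re) : ‖Gamma s‖ ≤ Real.Gamma s.re := by
  have h := Gamma_eq_fourier_gammaProfile hs s.im
  rw [re_add_im] at h
  rw [h, ← integral_gammaProfile hs]
  refine (VectorFourier.norm_fourierIntegral_le_integral_norm _ _ _ _ _).trans_eq ?_
  simp [abs_of_pos (gammaProfile_pos _ _)]

theorem norm_Gamma_mul_sq_norm_le {s : ℂ} (hs : 0 < s.re) :
    ‖Gamma s‖ * ‖s‖ ^ 2 ≤ Real.Gamma (s.re + 2) := by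
  have hs1 : 0 < (s + 1).re := by rw [add_re, one_re]; linarith
  have hrec : Gamma (s + 2) = (s + 1) * s * Gamma s := by
    rw [show s + 2 = s + 1 + 1 by ring, Gamma_add_one _ (ne_zero_of_re_pos hs1),
      Gamma_add_one _ (ne_zero_of_re_pos hs), mul_assoc]
  have hnorm : ‖s‖ ≤ ‖s + 1‖ := by
    rw [← sq_le_sq₀ (norm_nonneg _) (norm_nonneg _), Complex.sq_norm, Complex.sq_norm,
      normSq_apply, normSq_apply]
    simp only [add_re, one_re, add_im, one_im, add_zero]
    nlinarith
  calc ‖Gamma s‖ * ‖s‖ ^ 2 = ‖s‖ * ‖s‖ * ‖Gamma s‖ := by ring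
    _ ≤ ‖s + 1‖ * ‖s‖ * ‖Gamma s‖ := by gcongr
    _ = ‖Gamma (s + 2)‖ := by rw [hrec, norm_mul, norm_mul]
    _ ≤ Real.Gamma (s.re + 2) := by
      simpa using norm_Gamma_le_Gamma_re (s := s + 2) (by rw [add_re, re_ofNat]; linarith)

theorem integrable_Gamma_add_mul_I {b : ℝ} (hb : 0 < b) :
    Integrable fun t : ℝ ↦ Gamma (b + t * I) := by
  have hdom : Integrable fun t : ℝ ↦ Real.Gamma (b + 2) * (b ^ 2 + t ^ 2)⁻¹ := by
    have := (integrable_inv_one_add_sq.comp_div hb.ne').const_mul (Real.Gamma (b + 2) / b ^ 2)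
    refine this.congr (.of_forall fun t ↦ ?_)
    field_simp
  have hcont : Continuous fun t : ℝ ↦ Gamma (b + t * I) := by
    refine continuous_iff_continuousAt.2 fun t ↦
      ContinuousAt.comp (g := Gamma) (differentiableAt_Gamma _ fun m h ↦ ?_).continuousAt
        (by fun_prop)
    have hre := congrArg re h
    simp only [add_re, ofReal_re, mul_re, I_re, I_im, ofReal_im, neg_re, natCast_re] at hre
    linarith [(Nat.cast_nonneg m : (0 : ℝ) ≤ m)]
  refine hdom.mono' hcont.aestronglyMeasurable (.of_forall fun t ↦ ?_)
  have hre : (b + t * I).re = b := by simp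
  have h := norm_Gamma_mul_sq_norm_le (s := b + t * I) (by rwa [hre])
  rw [Complex.sq_norm, normSq_add_mul_I, hre] at h
  rwa [← div_eq_mul_inv, le_div_iff₀ (by positivity)]

theorem integrable_norm_sq_Gamma_add_mul_I {b : ℝ} (hb : 0 < b) :
    Integrable fun t : ℝ ↦ ‖Gamma (b + t * I)‖ ^ 2 := by
  have h := integrable_Gamma_add_mul_I hb
  refine (h.norm.const_mul (Real.Gamma b)).mono' (h.norm.aestronglyMeasurable.pow 2)
    (.of_forall fun t ↦ ?_)
  rw [norm_pow, norm_norm, sq]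
  gcongr
  simpa using norm_Gamma_le_Gamma_re (s := b + t * I) (by simpa using hb)

theorem integral_norm_sq_Gamma_add_mul_I {b : ℝ} (hb : 0 < b) :
    ∫ t : ℝ, ‖Gamma (b + t * I)‖ ^ 2 = 2 * π * Real.Gamma (2 * b) / 4 ^ b := by
  have hFf : Integrable (𝓕 fun u ↦ (gammaProfile b u : ℂ)) := by
    rw [← integrable_comp_div_iff _ (by positivity : 2 * π ≠ 0)]
    simpa only [← Gamma_eq_fourier_gammaProfile hb] using integrable_Gamma_add_mul_I hb
  have hplancherel := Continuous.integral_norm_sq_fourier (f := fun u ↦ (gammaProfile b u : ℂ))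
    (continuous_ofReal.comp (continuous_gammaProfile b)) (integrable_gammaProfile hb).ofReal hFf
  simp_rw [Gamma_eq_fourier_gammaProfile hb]
  rw [Measure.integral_comp_div (fun ξ ↦ ‖𝓕 (fun u ↦ (gammaProfile b u : ℂ)) ξ‖ ^ 2),
    hplancherel, abs_of_pos (by positivity), smul_eq_mul, mul_div_assoc,
    ← integral_gammaProfile_sq hb]
  simp [abs_of_pos (gammaProfile_pos _ _)]

theorem integral_norm_sq_Gamma_add_mul_I_pos {b : ℝ} (hb : 0 < b) :
    0 < ∫ t : ℝ, ‖Gamma (b + t * I)‖ ^ 2 := by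
  rw [integral_norm_sq_Gamma_add_mul_I hb]
  have := Real.Gamma_pos_of_pos (by positivity : 0 < 2 * b)
  positivity

theorem sq_mul_norm_sq_Gamma_add_mul_I {b : ℝ} (hb : 0 < b) (t : ℝ) :
    t ^ 2 * ‖Gamma (b + t * I)‖ ^ 2 =
      ‖Gamma ((b + 1 : ℝ) + t * I)‖ ^ 2 - b ^ 2 * ‖Gamma (b + t * I)‖ ^ 2 := by
  rw [show ((b + 1 : ℝ) : ℂ) + t * I = b + t * I + 1 by push_cast; ring,
    Gamma_add_one _ (ne_zero_of_re_pos (by simpa using hb)), norm_mul, mul_pow,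
    Complex.sq_norm (b + t * I), normSq_add_mul_I]
  ring

theorem integral_sq_mul_norm_sq_Gamma_add_mul_I {b : ℝ} (hb : 0 < b) :
    ∫ t : ℝ, t ^ 2 * ‖Gamma (b + t * I)‖ ^ 2 = b / 2 * ∫ t : ℝ, ‖Gamma (b + t * I)‖ ^ 2 := by
  have hb1 : 0 < b + 1 := by linarith
  simp_rw [sq_mul_norm_sq_Gamma_add_mul_I hb]
  rw [integral_sub (integrable_norm_sq_Gamma_add_mul_I hb1)
      ((integrable_norm_sq_Gamma_add_mul_I hb).const_mul _), integral_const_mul,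
    integral_norm_sq_Gamma_add_mul_I hb1, integral_norm_sq_Gamma_add_mul_I hb,
    Real.rpow_add_one (by norm_num), mul_add_one, show 2 * b + 2 = 2 * b + 1 + 1 by ring,
    Real.Gamma_add_one (by positivity), Real.Gamma_add_one (by positivity)]
  field_simp
  ring

theorem integral_sq_mul_norm_sq_Gamma_div_integral {b : ℝ} (hb : 0 < b) :
    (∫ t : ℝ, t ^ 2 * ‖Gamma (b + t * I)‖ ^ 2) / ∫ t : ℝ, ‖Gamma (b + t * I)‖ ^ 2 = b / 2 := by
  rw [integral_sq_mul_norm_sq_Gamma_add_mul_I hb,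
    mul_div_cancel_right₀ _ (integral_norm_sq_Gamma_add_mul_I_pos hb).ne']

end Complex

/-- The dispersion of γ ↦ Γ(α-1/2+iγ)/Γ(α) equals α/2 - 1/4. -/
theorem dispersion_gamma_ratio (α : ℝ) (hα : 1 / 2 < α) :
    (∫ t : ℝ, t ^ 2 *
        ‖Complex.Gamma (α - 1 / 2 + t * Complex.I) / Complex.Gamma α‖ ^ 2) /
      (∫ t : ℝ,
        ‖Complex.Gamma (α - 1 / 2 + t * Complex.I) / Complex.Gamma α‖ ^ 2)
      = α / 2 - 1 / 4 := by
  have hb : 0 < α - 1 / 2 := by linarith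
  have hcast : (α : ℂ) - 1 / 2 = ((α - 1 / 2 : ℝ) : ℂ) := by push_cast; ring
  have hΓα : ‖Complex.Gamma α‖ ^ 2 ≠ 0 := by
    have : Complex.Gamma α ≠ 0 := Complex.Gamma_ne_zero_of_re_pos (by rw [ofReal_re]; linarith)
    positivity
  simp_rw [norm_div, div_pow, hcast, mul_div_assoc', integral_div]
  rw [div_div_div_cancel_right₀ hΓα, Complex.integral_sq_mul_norm_sq_Gamma_div_integral hb]
  ring
end

section
/- For every α > 0 and every real y, ∫_{-∞}^{∞} |Γ(α+it)|² cos(yt) dt = π Γ(2α) / (2^{2α-1} cosh^{2α}(y/2)). -/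
/-!
Let `σ` be the logistic sigmoid and `K_α(u) = (σ(u) (1 - σ(u)))^α = (2 cosh (u/2))^(-2α)`.
The substitution `x = σ(u)` turns the Fourier integral of `K_α` into the Beta integral
`B(α - 2πiξ, α + 2πiξ)`, so `𝓕 K_α (ξ) = |Γ(α + 2πiξ)|² / Γ(2α)`. Since `K_α'` and `K_α''` are
bounded multiples of `K_α`, all three are integrable, so `𝓕 K_α = O((1 + ξ²)⁻¹)` is integrable
and Fourier inversion at `y`, followed by `t = 2πξ`, gives the formula.
-/

open Real MeasureTheory FourierTransform

namespace Real

theorem sigmoid_mul_one_sub_sigmoid_pos (u : ℝ) : 0 < sigmoid u * (1 - sigmoid u) :=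
  mul_pos (sigmoid_pos u) (sub_pos.2 (sigmoid_lt_one u))

theorem hasDerivAt_sigmoid_mul_one_sub_sigmoid (u : ℝ) :
    HasDerivAt (fun v => sigmoid v * (1 - sigmoid v))
      (sigmoid u * (1 - sigmoid u) * (1 - 2 * sigmoid u)) u :=
  ((hasDerivAt_sigmoid u).mul ((hasDerivAt_sigmoid u).const_sub 1)).congr_deriv (by ring)

theorem log_one_sub_sigmoid (u : ℝ) : log (1 - sigmoid u) = log (sigmoid u) - u := by
  rw [← sigmoid_neg, ← sigmoid_mul_rexp_neg, log_mul (sigmoid_pos u).ne' (exp_pos _).ne', log_exp]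
  ring

theorem sigmoid_mul_one_sub_sigmoid_eq (u : ℝ) :
    sigmoid u * (1 - sigmoid u) = ((2 * cosh (u / 2)) ^ 2)⁻¹ := by
  rw [← sigmoid_neg, sigmoid_def, sigmoid_def, neg_neg, ← mul_inv, cosh_eq]
  have h1 : exp u = exp (u / 2) ^ 2 := by rw [← exp_nat_mul]; ring_nf
  have h2 : exp (-u) = exp (-(u / 2)) ^ 2 := by rw [← exp_nat_mul]; ring_nf
  have h3 : exp (u / 2) * exp (-(u / 2)) = 1 := by rw [← exp_add, add_neg_cancel, exp_zero]
  congr 1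
  linear_combination (1 + exp (-u)) * h1 + (1 + exp (u / 2) ^ 2) * h2
    + (exp (u / 2) * exp (-(u / 2)) - 1) * h3

theorem re_fourierInv_ofReal {h : ℝ → ℝ} (hh : Integrable h) (y : ℝ) :
    (𝓕⁻ (fun ξ => (h ξ : ℂ)) y).re = ∫ ξ, cos (2 * π * ξ * y) * h ξ := by
  have hexp : ∀ ξ : ℝ, Complex.exp (↑(2 * π * inner ℝ ξ y) * Complex.I) • (h ξ : ℂ)
      = Complex.exp (↑(2 * π * ξ * y) * Complex.I) * (h ξ : ℂ) := by
    intro ξ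
    rw [smul_eq_mul, Real.inner_apply, ← mul_assoc]
  have hint : Integrable fun ξ : ℝ => Complex.exp (↑(2 * π * ξ * y) * Complex.I) * (h ξ : ℂ) :=
    hh.ofReal.bdd_mul (by fun_prop) (ae_of_all _ fun ξ => (Complex.norm_exp_ofReal_mul_I _).le)
  rw [Real.fourierInv_eq']
  simp_rw [hexp]
  rw [← Complex.reCLM_apply, ← ContinuousLinearMap.integral_comp_comm _ hint]
  simp only [Complex.reCLM_apply, Complex.re_mul_ofReal, Complex.exp_ofReal_mul_I_re]

theorem integrable_fourier_of_hasDerivAt {E : Type*} [NormedAddCommGroup E] [NormedSpace ℂ E]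
    {f f' f'' : ℝ → E} (hf : ∀ x, HasDerivAt f (f' x) x) (hf' : ∀ x, HasDerivAt f' (f'' x) x)
    (hfi : Integrable f) (hf'i : Integrable f') (hf''i : Integrable f'') :
    Integrable (𝓕 f) := by
  have hd : deriv f = f' := funext fun x => (hf x).deriv
  have hd' : deriv f' = f'' := funext fun x => (hf' x).deriv
  have hfourier : 𝓕 f'' = fun ξ : ℝ => (2 * π * Complex.I * ξ) ^ 2 • 𝓕 f ξ := by
    rw [← hd', Real.fourier_deriv hf'i (fun x => (hf' x).differentiableAt) (hd' ▸ hf''i), ← hd,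
      Real.fourier_deriv hfi (fun x => (hf x).differentiableAt) (hd ▸ hf'i)]
    simp only [pow_two, mul_smul]
  set C := (∫ x, ‖f x‖) + ∫ x, ‖f'' x‖
  have hbound : ∀ ξ : ℝ, ‖𝓕 f ξ‖ ≤ C * (1 + (2 * π * ξ) ^ 2)⁻¹ := by
    intro ξ
    have h0 : ‖𝓕 f ξ‖ ≤ ∫ x, ‖f x‖ :=
      VectorFourier.norm_fourierIntegral_le_integral_norm _ _ _ _ _
    have h2 : ‖𝓕 f'' ξ‖ ≤ ∫ x, ‖f'' x‖ :=
      VectorFourier.norm_fourierIntegral_le_integral_norm _ _ _ _ _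
    have hnorm : ‖𝓕 f'' ξ‖ = (2 * π * ξ) ^ 2 * ‖𝓕 f ξ‖ := by
      rw [hfourier, norm_smul, norm_pow]
      simp [abs_of_pos pi_pos, mul_pow, sq_abs]
    rw [le_mul_inv_iff₀ (by positivity)]
    nlinarith
  refine ((integrable_inv_one_add_sq.comp_mul_left' (by positivity : 2 * π ≠ 0)).const_mul C).mono'
    ?_ (ae_of_all _ hbound)
  exact (VectorFourier.fourierIntegral_continuous Real.continuous_fourierChar
    (innerSL ℝ).continuous₂ hfi).aestronglyMeasurable

end Real

namespace Complex

theorem abs_sigmoid_mul_one_sub_sigmoid_smul (a b : ℂ) (u : ℝ) :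
    |sigmoid u * (1 - sigmoid u)| • ((sigmoid u : ℂ) ^ (a - 1) * (1 - (sigmoid u : ℂ)) ^ (b - 1))
      = (sigmoid u : ℂ) ^ a * (1 - (sigmoid u : ℂ)) ^ b := by
  have h0 : (sigmoid u : ℂ) ≠ 0 := ofReal_ne_zero.2 (sigmoid_pos u).ne'
  have h1 : 1 - (sigmoid u : ℂ) ≠ 0 := by
    rw [← ofReal_one, ← ofReal_sub]; exact ofReal_ne_zero.2 (sub_pos.2 (sigmoid_lt_one u)).ne'
  rw [abs_of_pos (mul_pos (sigmoid_pos u) (sub_pos.2 (sigmoid_lt_one u))), real_smul,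
    cpow_sub _ _ h0, cpow_sub _ _ h1, cpow_one, cpow_one]
  push_cast
  field_simp

theorem betaIntegral_eq_integral_sigmoid (a b : ℂ) :
    betaIntegral a b = ∫ u : ℝ, (sigmoid u : ℂ) ^ a * (1 - (sigmoid u : ℂ)) ^ b := by
  have := integral_image_eq_integral_abs_deriv_smul MeasurableSet.univ
    (fun u _ => (hasDerivAt_sigmoid u).hasDerivWithinAt) sigmoid_injective.injOn
    (fun x : ℝ => (x : ℂ) ^ (a - 1) * (1 - (x : ℂ)) ^ (b - 1))
  rw [Set.image_univ, range_sigmoid, Measure.restrict_univ] at this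
  rw [betaIntegral, intervalIntegral.integral_of_le zero_le_one, integral_Ioc_eq_integral_Ioo,
    this]
  simp_rw [abs_sigmoid_mul_one_sub_sigmoid_smul]

theorem integrable_sigmoid_cpow_mul {a b : ℂ} (ha : 0 < a.re) (hb : 0 < b.re) :
    Integrable fun u : ℝ => (sigmoid u : ℂ) ^ a * (1 - (sigmoid u : ℂ)) ^ b := by
  have := integrableOn_image_iff_integrableOn_abs_deriv_smul MeasurableSet.univ
    (fun u _ => (hasDerivAt_sigmoid u).hasDerivWithinAt) sigmoid_injective.injOn
    (fun x : ℝ => (x : ℂ) ^ (a - 1) * (1 - (x : ℂ)) ^ (b - 1))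
  rw [Set.image_univ, range_sigmoid, integrableOn_univ] at this
  simp_rw [abs_sigmoid_mul_one_sub_sigmoid_smul] at this
  exact this.1 ((intervalIntegrable_iff_integrableOn_Ioo_of_le zero_le_one).1
    (betaIntegral_convergent ha hb))

theorem Gamma_conj_mul_Gamma (s : ℂ) :
    Gamma ((starRingEnd ℂ) s) * Gamma s = (‖Gamma s‖ ^ 2 : ℝ) := by
  rw [Gamma_conj, mul_comm, mul_conj, normSq_eq_norm_sq]

end Complex

noncomputable def sigmoidKernel (α u : ℝ) : ℝ := (sigmoid u * (1 - sigmoid u)) ^ α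

noncomputable def sigmoidKernelDeriv (α u : ℝ) : ℝ := α * (1 - 2 * sigmoid u) * sigmoidKernel α u

noncomputable def sigmoidKernelDeriv2 (α u : ℝ) : ℝ :=
  (α ^ 2 * (1 - 2 * sigmoid u) ^ 2 - 2 * α * (sigmoid u * (1 - sigmoid u))) * sigmoidKernel α u

theorem hasDerivAt_sigmoidKernel (α u : ℝ) :
    HasDerivAt (sigmoidKernel α) (sigmoidKernelDeriv α u) u := by
  have hp := sigmoid_mul_one_sub_sigmoid_pos u
  refine ((hasDerivAt_sigmoid_mul_one_sub_sigmoid u).rpow_const (p := α)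
    (Or.inl hp.ne')).congr_deriv ?_
  rw [sigmoidKernelDeriv, sigmoidKernel, rpow_sub_one hp.ne']
  generalize sigmoid u * (1 - sigmoid u) = p at hp ⊢
  field_simp

theorem hasDerivAt_sigmoidKernelDeriv (α u : ℝ) :
    HasDerivAt (sigmoidKernelDeriv α) (sigmoidKernelDeriv2 α u) u :=
  ((((hasDerivAt_sigmoid u).const_mul 2).const_sub 1).const_mul α |>.mul
    (hasDerivAt_sigmoidKernel α u)).congr_deriv
    (by rw [sigmoidKernelDeriv2, sigmoidKernelDeriv]; ring)

theorem continuous_sigmoidKernel (α : ℝ) : Continuous (sigmoidKernel α) :=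
  continuous_iff_continuousAt.2 fun u => (hasDerivAt_sigmoidKernel α u).continuousAt

theorem sigmoid_cpow_mul_one_sub_sigmoid_cpow (α s u : ℝ) :
    (sigmoid u : ℂ) ^ (α + s * Complex.I) * (1 - (sigmoid u : ℂ)) ^ (α - s * Complex.I)
      = sigmoidKernel α u * Complex.exp (s * u * Complex.I) := by
  have hσ := sigmoid_pos u
  have h1σ := sub_pos.2 (sigmoid_lt_one u)
  rw [← Complex.ofReal_one, ← Complex.ofReal_sub,
    Complex.cpow_def_of_ne_zero (Complex.ofReal_ne_zero.2 hσ.ne'),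
    Complex.cpow_def_of_ne_zero (Complex.ofReal_ne_zero.2 h1σ.ne'),
    ← Complex.ofReal_log hσ.le, ← Complex.ofReal_log h1σ.le, log_one_sub_sigmoid, sigmoidKernel,
    rpow_def_of_pos (mul_pos hσ h1σ), log_mul hσ.ne' h1σ.ne', log_one_sub_sigmoid,
    Complex.ofReal_exp, ← Complex.exp_add, ← Complex.exp_add]
  push_cast
  ring_nf

theorem integrable_sigmoidKernel {α : ℝ} (hα : 0 < α) : Integrable (sigmoidKernel α) := by
  have := Complex.integrable_sigmoid_cpow_mul (a := α + (0 : ℝ) * Complex.I)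
    (b := α - (0 : ℝ) * Complex.I) (by simpa) (by simpa)
  simp_rw [sigmoid_cpow_mul_one_sub_sigmoid_cpow] at this
  simpa using this.re

theorem integrable_sigmoidKernelDeriv {α : ℝ} (hα : 0 < α) : Integrable (sigmoidKernelDeriv α) :=
  (integrable_sigmoidKernel hα).bdd_mul (c := α) (by fun_prop) (ae_of_all _ fun u => by
    have hσ := sigmoid_pos u
    have hσ1 := sigmoid_lt_one u
    rw [norm_mul, Real.norm_of_nonneg hα.le, Real.norm_eq_abs]
    exact mul_le_of_le_one_right hα.le (abs_le.2 ⟨by linarith, by linarith⟩))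

theorem integrable_sigmoidKernelDeriv2 {α : ℝ} (hα : 0 < α) :
    Integrable (sigmoidKernelDeriv2 α) :=
  (integrable_sigmoidKernel hα).bdd_mul (c := α ^ 2 + α) (by fun_prop) (ae_of_all _ fun u => by
    have hσ := sigmoid_pos u
    have hσ1 := sigmoid_lt_one u
    rw [Real.norm_eq_abs, abs_le]
    constructor <;> nlinarith [mul_pos hα (mul_pos hσ (sub_pos.2 hσ1))])

theorem fourier_sigmoidKernel {α : ℝ} (hα : 0 < α) (ξ : ℝ) :
    𝓕 (fun u => (sigmoidKernel α u : ℂ)) ξ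
      = ((‖Complex.Gamma (α + (2 * π * ξ : ℝ) * Complex.I)‖ ^ 2 / Real.Gamma (2 * α) : ℝ) : ℂ) := by
  set s : ℝ := 2 * π * ξ
  have hexp : ∀ u : ℝ, Complex.exp (↑(-2 * π * u * ξ) * Complex.I) • (sigmoidKernel α u : ℂ)
      = (sigmoid u : ℂ) ^ (α + (-s : ℝ) * Complex.I)
        * (1 - (sigmoid u : ℂ)) ^ (α - (-s : ℝ) * Complex.I) := by
    intro u
    rw [sigmoid_cpow_mul_one_sub_sigmoid_cpow, smul_eq_mul, mul_comm]
    simp only [s]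
    push_cast
    ring_nf
  rw [Real.fourier_real_eq_integral_exp_smul]
  simp_rw [hexp]
  rw [← Complex.betaIntegral_eq_integral_sigmoid]
  have hΓ := Complex.Gamma_mul_Gamma_eq_betaIntegral (s := α + (-s : ℝ) * Complex.I)
    (t := α - (-s : ℝ) * Complex.I) (by simpa) (by simpa)
  have hsum : (α + (-s : ℝ) * Complex.I) + (α - (-s : ℝ) * Complex.I) = (2 * α : ℝ) := by
    push_cast; ring
  have hconj : (α + (-s : ℝ) * Complex.I) = (starRingEnd ℂ) (α + s * Complex.I) := by
    simp [Complex.conj_ofReal]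
  have hb : (α - (-s : ℝ) * Complex.I) = α + s * Complex.I := by push_cast; ring
  rw [hsum, Complex.Gamma_ofReal, hconj, hb, Complex.Gamma_conj_mul_Gamma] at hΓ
  have hΓ2 : (Real.Gamma (2 * α) : ℂ) ≠ 0 :=
    Complex.ofReal_ne_zero.2 (Real.Gamma_pos_of_pos (by positivity)).ne'
  rw [hconj, hb, Complex.ofReal_div, hΓ, mul_div_cancel_left₀ _ hΓ2]

theorem sigmoidKernel_eq (α u : ℝ) :
    sigmoidKernel α u = ((2 * cosh (u / 2)) ^ (2 * α))⁻¹ := by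
  rw [sigmoidKernel, sigmoid_mul_one_sub_sigmoid_eq, inv_rpow (by positivity),
    ← rpow_natCast_mul (by positivity)]
  norm_num

theorem integrable_fourier_sigmoidKernel {α : ℝ} (hα : 0 < α) :
    Integrable (𝓕 fun u => (sigmoidKernel α u : ℂ)) :=
  integrable_fourier_of_hasDerivAt (fun u => (hasDerivAt_sigmoidKernel α u).ofReal_comp)
    (fun u => (hasDerivAt_sigmoidKernelDeriv α u).ofReal_comp)
    (integrable_sigmoidKernel hα).ofReal (integrable_sigmoidKernelDeriv hα).ofReal
    (integrable_sigmoidKernelDeriv2 hα).ofReal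

theorem sigmoidKernel_eq_integral_cos {α : ℝ} (hα : 0 < α) (y : ℝ) :
    sigmoidKernel α y = ∫ ξ, cos (2 * π * ξ * y) *
      (‖Complex.Gamma (α + (2 * π * ξ : ℝ) * Complex.I)‖ ^ 2 / Real.Gamma (2 * α)) := by
  have hFG := funext (fourier_sigmoidKernel hα)
  have hFGi := integrable_fourier_sigmoidKernel hα
  have hGc : Continuous fun u => (sigmoidKernel α u : ℂ) :=
    Complex.continuous_ofReal.comp (continuous_sigmoidKernel α)
  rw [← re_fourierInv_ofReal (by simpa only [hFG, RCLike.re_to_complex, Complex.ofReal_re]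
      using hFGi.re), ← hFG,
    hGc.fourierInv_fourier_eq (integrable_sigmoidKernel hα).ofReal hFGi, Complex.ofReal_re]

/-- ∫_{-∞}^{∞} |Γ(α+it)|² cos(yt) dt = π Γ(2α)/(2^{2α-1} cosh^{2α}(y/2)). -/
theorem integral_sq_abs_Gamma_cos (α : ℝ) (hα : 0 < α) (y : ℝ) :
    ∫ t : ℝ, ‖Complex.Gamma (α + t * Complex.I)‖ ^ 2 * Real.cos (y * t)
      = π * Real.Gamma (2 * α) / ((2 : ℝ) ^ (2 * α - 1) * Real.cosh (y / 2) ^ (2 * α)) := by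
  have hK : sigmoidKernel α y = (2 * π)⁻¹ *
      ((∫ t : ℝ, ‖Complex.Gamma (α + t * Complex.I)‖ ^ 2 * cos (y * t)) / Real.Gamma (2 * α)) := by
    have hscale := Measure.integral_comp_mul_left
      (fun t => ‖Complex.Gamma (α + t * Complex.I)‖ ^ 2 * cos (y * t) / Real.Gamma (2 * α)) (2 * π)
    rw [abs_of_pos (inv_pos.2 two_pi_pos), smul_eq_mul] at hscale
    rw [sigmoidKernel_eq_integral_cos hα, ← integral_div, ← hscale]
    congr 1 with ξ
    ring_nf
  rw [sigmoidKernel_eq, mul_rpow zero_le_two (cosh_pos _).le] at hK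
  have hΓ := Real.Gamma_pos_of_pos (by positivity : 0 < 2 * α)
  have hc := rpow_pos_of_pos (cosh_pos (y / 2)) (2 * α)
  generalize ∫ t : ℝ, ‖Complex.Gamma (α + t * Complex.I)‖ ^ 2 * cos (y * t) = I at hK ⊢
  rw [rpow_sub_one two_ne_zero]
  field_simp at hK ⊢
  linarith
end

section
/- Let μ, σ > 0, α = (μ/σ)², λ = μ/α, and let j be a real number with |j| ≤ ησ for fixed η. As α → ∞ (with μ = √α σ), w_{α,λ}(μ+j) = (1/(μ+j))·√(α/(2π))·exp(-(α/2)(j/μ)²)·(1 + O(1/√α)). -/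
/-! The ratio of the Gamma density at `μ (1 + x)` to its Gaussian approximation is exactly
`exp (D α + α (log (1 + x) - x + x² / 2))`, where `D α = logStirling α - log (Γ α)` is the error in
Stirling's formula. For `|x| ≤ η / √α` the Taylor remainder contributes `O(α |x|³) = O(1 / √α)`,
and `D α = O(1 / α)`: at integers this is Robbins' bound on the Stirling sequence, and
log-convexity of `Γ` interpolates between `⌊α⌋` and `⌊α⌋ + 1`. Finally `|exp u - 1| ≤ 2 |u|`. -/

open Real Filter Topology

namespace Stirling

theorem log_stirlingSeq_le {n : ℕ} (hn : n ≠ 0) :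
    log (stirlingSeq n) ≤ log √π + 1 / (12 * n) := by
  set f : ℕ → ℝ := fun k ↦ log (stirlingSeq (k + 1)) - 1 / (12 * (k + 1 : ℕ))
  have hf_mono : Monotone f := by
    refine monotone_nat_of_le_succ fun k ↦ ?_
    have h := log_stirlingSeq_sdiff_le (k + 1)
    have h_telescope : (1 : ℝ) / (12 * (k + 1 : ℕ)) - 1 / (12 * (k + 1 + 1 : ℕ)) =
        1 / (12 * (k + 1 : ℕ) * ((k + 1 : ℕ) + 1)) := by
      push_cast; field_simp; ring
    simp only [f]
    linarith
  have hf_lim : Tendsto f atTop (𝓝 (log √π - 0)) := by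
    refine ((continuousAt_log (by positivity)).tendsto.comp
      (tendsto_stirlingSeq_sqrt_pi.comp (tendsto_add_atTop_nat 1))).sub ?_
    refine tendsto_const_nhds.div_atTop (Tendsto.const_mul_atTop (by norm_num) ?_)
    exact tendsto_natCast_atTop_atTop.comp (tendsto_add_atTop_nat 1)
  obtain ⟨k, rfl⟩ := Nat.exists_eq_succ_of_ne_zero hn
  have := hf_mono.ge_of_tendsto hf_lim k
  simp only [f, sub_zero] at this
  linarith

end Stirling

open Stirling

noncomputable def logStirling (x : ℝ) : ℝ := (x - 1 / 2) * log x - x + log (2 * π) / 2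

theorem log_Gamma_natCast {n : ℕ} (hn : n ≠ 0) : log (Gamma n) = log n.factorial - log n := by
  have hn' : (n : ℝ) ≠ 0 := Nat.cast_ne_zero.2 hn
  rw [← Gamma_nat_eq_factorial, Gamma_add_one hn',
    log_mul hn' (Gamma_pos_of_pos (by positivity)).ne']
  ring

theorem logStirling_le_log_Gamma_natCast {n : ℕ} (hn : n ≠ 0) : logStirling n ≤ log (Gamma n) := by
  have := le_log_factorial_stirling hn
  rw [log_Gamma_natCast hn, logStirling]
  linarith

theorem log_Gamma_natCast_le {n : ℕ} (hn : n ≠ 0) :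
    log (Gamma n) ≤ logStirling n + 1 / (12 * n) := by
  have h := log_stirlingSeq_le hn
  have hn0 : (0 : ℝ) < n := by positivity
  rw [log_stirlingSeq_formula, log_mul two_ne_zero hn0.ne', log_div hn0.ne' (exp_ne_zero 1),
    log_exp, log_sqrt pi_pos.le] at h
  rw [log_Gamma_natCast hn, logStirling, log_mul two_ne_zero pi_ne_zero]
  linarith

theorem log_Gamma_add_le {y s : ℝ} (hy : 0 < y) (hs₀ : 0 ≤ s) (hs₁ : s ≤ 1) :
    log (Gamma (y + s)) ≤ log (Gamma y) + s * log y := by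
  have h := convexOn_log_Gamma.2 (Set.mem_Ioi.2 hy) (Set.mem_Ioi.2 (by linarith : 0 < y + 1))
    (by linarith : 0 ≤ 1 - s) hs₀ (by ring)
  simp only [smul_eq_mul, Function.comp] at h
  rw [Gamma_add_one hy.ne', log_mul hy.ne' (Gamma_pos_of_pos hy).ne'] at h
  calc log (Gamma (y + s)) = log (Gamma ((1 - s) * y + s * (y + 1))) := by ring_nf
    _ ≤ _ := h
    _ = _ := by ring

theorem log_Gamma_sub_logStirling_le {x : ℝ} (hx : 2 ≤ x) :
    log (Gamma x) - logStirling x ≤ 1 / x := by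
  set n := ⌊x⌋₊
  set t := x - n
  have hn : n ≠ 0 := (Nat.floor_pos.2 (by linarith)).ne'
  have hn0 : (0 : ℝ) < n := by positivity
  have hnx : (n : ℝ) ≤ x := Nat.floor_le (by linarith)
  have hxn : x < n + 1 := Nat.lt_floor_add_one x
  have h_interp : log (Gamma x) ≤ log (Gamma n) + t * log n := by
    simpa [t] using log_Gamma_add_le hn0 (sub_nonneg.2 hnx) (by linarith)
  have h_log : log n - log x ≤ -(t / x) := by
    have := log_le_sub_one_of_pos (div_pos hn0 (by linarith : 0 < x))
    rw [log_div hn0.ne' (by linarith)] at this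
    have h_frac : (n : ℝ) / x - 1 = -(t / x) := by field_simp; ring
    linarith
  have h_mul : (x - 1 / 2) * (log n - log x) ≤ (x - 1 / 2) * -(t / x) :=
    mul_le_mul_of_nonneg_left h_log (by linarith)
  have h_diff : logStirling n + t * log n - logStirling x = (x - 1 / 2) * (log n - log x) + t := by
    simp only [logStirling, t]; ring
  have h_eval : (x - 1 / 2) * -(t / x) + t = t / (2 * x) := by field_simp; ring
  have h12 : 1 / (12 * (n : ℝ)) ≤ 1 / (2 * x) := by
    rw [div_le_div_iff₀ (by positivity) (by positivity)]; linarith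
  have ht2 : t / (2 * x) ≤ 1 / (2 * x) := by gcongr; linarith
  have h_half : 1 / (2 * x) + 1 / (2 * x) = 1 / x := by field_simp; ring
  linarith [log_Gamma_natCast_le hn]

theorem logStirling_sub_log_Gamma_le {x : ℝ} (hx : 2 ≤ x) :
    logStirling x - log (Gamma x) ≤ 1 / x := by
  set n := ⌊x⌋₊
  set t := x - n
  have hn : n ≠ 0 := (Nat.floor_pos.2 (by linarith)).ne'
  have hn0 : (0 : ℝ) < n := by positivity
  have hnx : (n : ℝ) ≤ x := Nat.floor_le (by linarith)
  have hxn : x < n + 1 := Nat.lt_floor_add_one x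
  have h_interp : log n + log (Gamma n) ≤ log (Gamma x) + (1 - t) * log x := by
    have := log_Gamma_add_le (by linarith : 0 < x) (by linarith : 0 ≤ 1 - t) (by linarith)
    rwa [show x + (1 - t) = n + 1 by ring, Gamma_add_one hn0.ne',
      log_mul hn0.ne' (Gamma_pos_of_pos hn0).ne'] at this
  have h_log : log x - log n ≤ t / n := by
    have := log_le_sub_one_of_pos (div_pos (by linarith : 0 < x) hn0)
    rw [log_div (by linarith) hn0.ne'] at this
    have h_frac : x / n - 1 = t / n := by field_simp; ring
    linarith
  have h_mul : (n + 1 / 2) * (log x - log n) ≤ (n + 1 / 2) * (t / n) :=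
    mul_le_mul_of_nonneg_left h_log (by linarith)
  have h_diff : logStirling x + (1 - t) * log x - log n - logStirling n =
      (n + 1 / 2) * (log x - log n) - t := by
    simp only [logStirling, t]; ring
  have h_eval : (n + 1 / 2) * (t / n) - t = t / (2 * n) := by field_simp; ring
  have h2 : t / (2 * n) ≤ 1 / x := by
    rw [div_le_div_iff₀ (by positivity) (by positivity)]; nlinarith
  linarith [logStirling_le_log_Gamma_natCast hn]

theorem abs_log_Gamma_sub_logStirling_le {x : ℝ} (hx : 2 ≤ x) :
    |log (Gamma x) - logStirling x| ≤ 1 / x :=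
  abs_sub_le_iff.2 ⟨log_Gamma_sub_logStirling_le hx, logStirling_sub_log_Gamma_le hx⟩

theorem abs_log_one_add_sub_self_add_sq_div_two_le {x : ℝ} (hx : |x| ≤ 1 / 2) :
    |log (1 + x) - x + x ^ 2 / 2| ≤ 2 * |x| ^ 3 := by
  have h := abs_log_sub_add_sum_range_le (x := -x) (by rw [abs_neg]; linarith) 2
  rw [Finset.sum_range_succ, Finset.sum_range_succ, Finset.sum_range_zero] at h
  norm_num at h
  rw [show log (1 + x) - x + x ^ 2 / 2 = -x + x ^ 2 / 2 + log (1 + x) by ring]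
  refine h.trans ?_
  rw [div_le_iff₀ (by linarith)]
  nlinarith [pow_nonneg (abs_nonneg x) 3]

theorem gamma_density_div_gaussian_eq_exp {α μ j : ℝ} (hα : 0 < α) (hμ : 0 < μ)
    (hμj : 0 < μ + j) :
    ((μ + j) ^ (α - 1) * exp (-(μ + j) / (μ / α)) / ((μ / α) ^ α * Gamma α)) /
        ((1 / (μ + j)) * √(α / (2 * π)) * exp (-(α / 2) * (j / μ) ^ 2)) =
      exp (logStirling α - log (Gamma α) + α * (log (1 + j / μ) - j / μ + (j / μ) ^ 2 / 2)) := by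
  have hΓ : 0 < Gamma α := Gamma_pos_of_pos hα
  have hlam : 0 < μ / α := div_pos hμ hα
  have h_gamma : log ((μ + j) ^ (α - 1) * exp (-(μ + j) / (μ / α)) / ((μ / α) ^ α * Gamma α)) =
      (α - 1) * log (μ + j) - α * ((μ + j) / μ) - (α * (log μ - log α) + log (Gamma α)) := by
    rw [log_div (by positivity) (by positivity), log_mul (by positivity) (exp_pos _).ne',
      log_mul (by positivity) hΓ.ne', log_rpow hμj, log_rpow hlam, log_exp, log_div hμ.ne' hα.ne']
    field_simp
    ring
  have h_gauss : log ((1 / (μ + j)) * √(α / (2 * π)) * exp (-(α / 2) * (j / μ) ^ 2)) =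
      -log (μ + j) + (log α - log (2 * π)) / 2 - α / 2 * (j / μ) ^ 2 := by
    rw [log_mul (by positivity) (exp_pos _).ne', log_mul (by positivity) (by positivity),
      one_div, log_inv, log_sqrt (by positivity), log_div hα.ne' (by positivity), log_exp]
    ring
  refine (exp_log ?_).symm.trans (congrArg exp ?_)
  · positivity
  rw [log_div (by positivity) (by positivity), h_gamma, h_gauss,
    show 1 + j / μ = (μ + j) / μ by field_simp, log_div hμj.ne' hμ.ne', logStirling]
  field_simp
  ring

theorem abs_logStirling_sub_log_Gamma_add_mul_le {α x η : ℝ} (hα : 2 ≤ α)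
    (hx : |x| ≤ η / √α) (hx₂ : |x| ≤ 1 / 2) :
    |logStirling α - log (Gamma α) + α * (log (1 + x) - x + x ^ 2 / 2)| ≤
      (1 + 2 * η ^ 3) / √α := by
  have hsq : √α ^ 2 = α := sq_sqrt (by linarith)
  have h_stirling : |logStirling α - log (Gamma α)| ≤ 1 / √α := by
    rw [abs_sub_comm]
    refine (abs_log_Gamma_sub_logStirling_le hα).trans ?_
    gcongr
    exact sqrt_le_self_iff.2 (Or.inr (by linarith))
  have h_taylor : α * |log (1 + x) - x + x ^ 2 / 2| ≤ 2 * η ^ 3 / √α := by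
    calc α * |log (1 + x) - x + x ^ 2 / 2| ≤ α * (2 * (η / √α) ^ 3) := by
          gcongr
          exact (abs_log_one_add_sub_self_add_sq_div_two_le hx₂).trans (by gcongr)
      _ = 2 * η ^ 3 / √α := by field_simp; rw [hsq]; ring
  calc _ ≤ |logStirling α - log (Gamma α)| + α * |log (1 + x) - x + x ^ 2 / 2| := by
        refine (abs_add_le _ _).trans_eq ?_
        rw [abs_mul, abs_of_nonneg (by linarith : 0 ≤ α)]
    _ ≤ (1 + 2 * η ^ 3) / √α := by rw [add_div]; gcongr

/-- Gaussian local approximation of the Gamma density near its mean: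
with μ = √α σ, λ = μ/α, uniformly for |j| ≤ ησ,
w_{α,λ}(μ+j) = (1/(μ+j)) √(α/(2π)) exp(-(α/2)(j/μ)²)(1+O(1/√α)) as α → ∞. -/
theorem gamma_density_local_clt (σ η : ℝ) (hσ : 0 < σ) (hη : 0 < η) :
    ∃ K α₀ : ℝ, 0 < K ∧ 0 < α₀ ∧
      ∀ α : ℝ, α₀ ≤ α → ∀ j : ℝ, |j| ≤ η * σ →
        let μ := Real.sqrt α * σ
        let lam := μ / α
        |((μ + j) ^ (α - 1) * Real.exp (-(μ + j) / lam) / (lam ^ α * Real.Gamma α)) /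
            ((1 / (μ + j)) * Real.sqrt (α / (2 * π)) * Real.exp (-(α / 2) * (j / μ) ^ 2))
          - 1| ≤ K / Real.sqrt α := by
  set c := 2 + 2 * η + 2 * η ^ 3
  refine ⟨2 * (1 + 2 * η ^ 3), c ^ 2, by positivity, by positivity, fun α hα j hj ↦ ?_⟩
  intro μ lam
  have hc : c ≤ √α := le_sqrt_of_sq_le hα
  have hc₂ : 2 ≤ c := by linarith [pow_pos hη 3]
  have hα₂ : 2 ≤ α := by nlinarith
  have hμ : 0 < μ := by positivity
  have hx : |j / μ| ≤ η / √α := by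
    rw [abs_div, abs_of_pos hμ, div_le_div_iff₀ hμ (by positivity)]
    calc |j| * √α ≤ η * σ * √α := by gcongr
      _ = η * μ := by ring
  have hx₂ : |j / μ| ≤ 1 / 2 := by
    refine hx.trans ?_
    rw [div_le_div_iff₀ (by positivity) two_pos]
    linarith [pow_pos hη 3]
  have hμj : 0 < μ + j := by
    rw [abs_le, div_le_iff₀ hμ, le_div_iff₀ hμ] at hx₂
    linarith
  rw [show lam = μ / α from rfl, gamma_density_div_gaussian_eq_exp (by linarith) hμ hμj]
  have hu := abs_logStirling_sub_log_Gamma_add_mul_le hα₂ hx hx₂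
  calc _ ≤ 2 * |logStirling α - log (Gamma α) +
          α * (log (1 + j / μ) - j / μ + (j / μ) ^ 2 / 2)| :=
        abs_exp_sub_one_le (hu.trans ((div_le_one (by positivity)).2 (by linarith [pow_pos hη 3])))
    _ ≤ 2 * (1 + 2 * η ^ 3) / √α := by rw [mul_div_assoc]; gcongr
end
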